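/- Let I be a bounded interval and (W_n) a sequence of graphons taking values in I. If for every q ≥ 1 and every symmetric q×q matrix J the sequence (E_b(W_n, J))_n converges, where b = (1/q,…,1/q) is the uniform distribution on [q], then for every q ≥ 1, every probability distribution a on [q], and every symmetric q×q matrix J, the sequence (E_a(W_n, J))_n converges. -/

import Mathlib

open MeasureTheory Filter

noncomputable section

/-- The unit interval as a subset of ℝ. -/
def I01 : Set ℝ := Set.Icc 0 1

/-- A `q`-fractional partition: measurable functions `ρ i : [0,1] → [0,1]`
summing pointwise to `1` on `[0,1]`. -/
structure FracPartition (q : ℕ) where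
  toFun : Fin q → ℝ → ℝ
  measurable : ∀ i, Measurable (toFun i)
  mem_I01 : ∀ i x, x ∈ I01 → toFun i x ∈ I01
  sum_one : ∀ x ∈ I01, ∑ i, toFun i x = 1

/-- Energy of a fractional partition with respect to a graphon `W` and matrix `J`. -/
def energy {q : ℕ} (W : ℝ → ℝ → ℝ) (J : Matrix (Fin q) (Fin q) ℝ)
    (ρ : FracPartition q) : ℝ :=
  - ∑ i, ∑ j, J i j * ∫ x in I01, ∫ y in I01, ρ.toFun i x * ρ.toFun j y * W x y

/-- `a` is a probability distribution on `Fin q`. -/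
def IsDist {q : ℕ} (a : Fin q → ℝ) : Prop :=
  (∀ i, 0 ≤ a i) ∧ ∑ i, a i = 1

/-- Microcanonical ground state energy. -/
def mgse {q : ℕ} (W : ℝ → ℝ → ℝ) (J : Matrix (Fin q) (Fin q) ℝ) (a : Fin q → ℝ) : ℝ :=
  sInf {e | ∃ ρ : FracPartition q, (∀ i, (∫ x in I01, ρ.toFun i x) = a i) ∧ e = energy W J ρ}

/-- General lower threshold ground state energy with threshold vector `x`. -/
def ltgseV {q : ℕ} (W : ℝ → ℝ → ℝ) (J : Matrix (Fin q) (Fin q) ℝ) (x : Fin q → ℝ) : ℝ :=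
  sInf {e | ∃ a : Fin q → ℝ, IsDist a ∧ (∀ i, x i ≤ a i) ∧ e = mgse W J a}

/-- Homogeneous lower threshold ground state energy with scalar threshold `c`. -/
def ltgse {q : ℕ} (W : ℝ → ℝ → ℝ) (J : Matrix (Fin q) (Fin q) ℝ) (c : ℝ) : ℝ :=
  ltgseV W J (fun _ => c)

/-- Unrestricted ground state energy. -/
def gse {q : ℕ} (W : ℝ → ℝ → ℝ) (J : Matrix (Fin q) (Fin q) ℝ) : ℝ :=
  sInf {e | ∃ ρ : FracPartition q, e = energy W J ρ}

/-- `W` is a graphon: a bounded symmetric measurable function. -/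
def IsGraphon (W : ℝ → ℝ → ℝ) : Prop :=
  Measurable (Function.uncurry W) ∧ (∀ x y, W x y = W y x) ∧ ∃ M, ∀ x y, |W x y| ≤ M


/-!
The map `a ↦ E_a(W, J)` is Lipschitz on distributions, uniformly over graphons with values in a
fixed bounded interval: a fractional partition with marginals `a` becomes one with marginals `a'`
by moving at most `|a i - a' i|` of mass out of or into each class, and moving mass `D` changes the
energy by at most `2 M D ∑ |J i j|`. For a distribution `k / m` with positive integers `k i`,
splitting class `i` into `k i` classes of equal mass identifies `E_{k/m}(W, J)` with the uniform
energy `E_{1/m}(W, J')` of the blown-up matrix `J'`, which converges by hypothesis. Such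
distributions are dense, so `E_a(W_n, J)` is uniformly close to convergent sequences, hence Cauchy.
-/

open Finset

section GraphonForm

variable {α : Type*} [MeasurableSpace α] {μ : Measure α} {W : α → α → ℝ} {M : ℝ}

def graphonForm (μ : Measure α) (W : α → α → ℝ) (f g : α → ℝ) : ℝ :=
  ∫ p, f p.1 * g p.2 * W p.1 p.2 ∂μ.prod μ

lemma ae_abs_graphonIntegrand_le (hWM : ∀ x y, |W x y| ≤ M) {f g : α → ℝ}
    (hf : ∀ᵐ x ∂μ, |f x| ≤ 1) (hg : ∀ᵐ x ∂μ, |g x| ≤ 1) :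
    ∀ᵐ p ∂μ.prod μ, |f p.1 * g p.2 * W p.1 p.2| ≤ M := by
  filter_upwards [Measure.quasiMeasurePreserving_fst.ae hf,
    Measure.quasiMeasurePreserving_snd.ae hg] with p hfp hgp
  rw [abs_mul, abs_mul]
  calc |f p.1| * |g p.2| * |W p.1 p.2| ≤ 1 * 1 * M := by gcongr; exact hWM _ _
    _ = M := by ring

variable [IsFiniteMeasure μ]

lemma integrable_graphonIntegrand (hW : Measurable (Function.uncurry W))
    (hWM : ∀ x y, |W x y| ≤ M) {f g : α → ℝ} (hf : Measurable f)
    (hf1 : ∀ᵐ x ∂μ, |f x| ≤ 1) (hg : Measurable g) (hg1 : ∀ᵐ x ∂μ, |g x| ≤ 1) :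
    Integrable (fun p => f p.1 * g p.2 * W p.1 p.2) (μ.prod μ) :=
  .of_bound (((hf.comp measurable_fst).mul (hg.comp measurable_snd)).mul hW).aestronglyMeasurable
    M (ae_abs_graphonIntegrand_le hWM hf1 hg1)

lemma graphonForm_sum_sum (hW : Measurable (Function.uncurry W)) (hWM : ∀ x y, |W x y| ≤ M)
    {ι κ : Type*} (A : Finset ι) (B : Finset κ) {f : ι → α → ℝ} {g : κ → α → ℝ}
    (hf : ∀ s, Measurable (f s)) (hf1 : ∀ s, ∀ᵐ x ∂μ, |f s x| ≤ 1)
    (hg : ∀ t, Measurable (g t)) (hg1 : ∀ t, ∀ᵐ x ∂μ, |g t x| ≤ 1) :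
    graphonForm μ W (fun x => ∑ s ∈ A, f s x) (fun y => ∑ t ∈ B, g t y)
      = ∑ s ∈ A, ∑ t ∈ B, graphonForm μ W (f s) (g t) := by
  have hint := fun s t => integrable_graphonIntegrand hW hWM (hf s) (hf1 s) (hg t) (hg1 t)
  simp_rw [graphonForm, sum_mul_sum, sum_mul]
  rw [integral_finsetSum _ fun s _ => integrable_finsetSum _ fun t _ => hint s t]
  exact sum_congr rfl fun s _ => integral_finsetSum _ fun t _ => hint s t

lemma abs_graphonForm_le [IsProbabilityMeasure μ] (hWM : ∀ x y, |W x y| ≤ M) {f g : α → ℝ}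
    (hf : ∀ᵐ x ∂μ, |f x| ≤ 1) (hg : ∀ᵐ x ∂μ, |g x| ≤ 1) :
    |graphonForm μ W f g| ≤ M := by
  have hbound := ae_abs_graphonIntegrand_le hWM hf hg
  simp_rw [← Real.norm_eq_abs] at hbound ⊢
  simpa [graphonForm] using norm_integral_le_of_norm_le_const hbound

lemma abs_graphonForm_sub_le [IsProbabilityMeasure μ] (hW : Measurable (Function.uncurry W))
    (hWM : ∀ x y, |W x y| ≤ M) {f f' g g' : α → ℝ}
    (hf : Measurable f) (hf1 : ∀ᵐ x ∂μ, |f x| ≤ 1)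
    (hf' : Measurable f') (hf'1 : ∀ᵐ x ∂μ, |f' x| ≤ 1)
    (hg : Measurable g) (hg1 : ∀ᵐ x ∂μ, |g x| ≤ 1)
    (hg' : Measurable g') (hg'1 : ∀ᵐ x ∂μ, |g' x| ≤ 1) :
    |graphonForm μ W f g - graphonForm μ W f' g'|
      ≤ M * ((∫ x, |f x - f' x| ∂μ) + ∫ x, |g x - g' x| ∂μ) := by
  have hint (u : α → ℝ) (hu : Measurable u) (hu1 : ∀ᵐ x ∂μ, |u x| ≤ 1) :
      Integrable u μ := .of_bound hu.aestronglyMeasurable 1 hu1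
  have hdf : Integrable (fun x => |f x - f' x|) μ := ((hint f hf hf1).sub (hint f' hf' hf'1)).abs
  have hdg : Integrable (fun x => |g x - g' x|) μ := ((hint g hg hg1).sub (hint g' hg' hg'1)).abs
  have hbound : Integrable (fun p : α × α => M * |f p.1 - f' p.1| + M * |g p.2 - g' p.2|)
      (μ.prod μ) := ((hdf.comp_fst μ).const_mul M).add ((hdg.comp_snd μ).const_mul M)
  unfold graphonForm
  rw [← integral_sub (integrable_graphonIntegrand hW hWM hf hf1 hg hg1)
    (integrable_graphonIntegrand hW hWM hf' hf'1 hg' hg'1)]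
  calc |∫ p, (f p.1 * g p.2 * W p.1 p.2 - f' p.1 * g' p.2 * W p.1 p.2) ∂μ.prod μ|
        ≤ ∫ p, M * |f p.1 - f' p.1| + M * |g p.2 - g' p.2| ∂μ.prod μ := by
        rw [← Real.norm_eq_abs]
        refine norm_integral_le_of_norm_le hbound ?_
        filter_upwards [Measure.quasiMeasurePreserving_fst.ae hf'1,
          Measure.quasiMeasurePreserving_snd.ae hg1] with p hf'p hgp
        have hWp := hWM p.1 p.2
        rw [Real.norm_eq_abs, show f p.1 * g p.2 * W p.1 p.2 - f' p.1 * g' p.2 * W p.1 p.2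
          = (f p.1 - f' p.1) * g p.2 * W p.1 p.2 + f' p.1 * (g p.2 - g' p.2) * W p.1 p.2 by ring]
        refine (abs_add_le _ _).trans ?_
        simp only [abs_mul]
        calc _ ≤ |f p.1 - f' p.1| * 1 * M + 1 * |g p.2 - g' p.2| * M := by gcongr
          _ = _ := by ring
    _ = _ := by
        rw [integral_add ((hdf.comp_fst μ).const_mul M) ((hdg.comp_snd μ).const_mul M),
          integral_const_mul M, integral_const_mul M, integral_fun_fst (fun x => |f x - f' x|),
          integral_fun_snd (fun x => |g x - g' x|)]
        simp [mul_add]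

end GraphonForm

lemma Finset.sum_fiberwise_dep {ι κ R : Type*} [Fintype ι] [Fintype κ] [DecidableEq κ]
    [AddCommMonoid R] (g : ι → κ) (f : κ → ι → R) :
    ∑ j, ∑ i with g i = j, f j i = ∑ i, f (g i) i := by
  rw [← sum_fiberwise univ g fun i => f (g i) i]
  exact sum_congr rfl fun j _ => sum_congr rfl fun i hi => by rw [(mem_filter.1 hi).2]

lemma abs_sum_sum_mul_le {ι : Type*} [Fintype ι] (J : Matrix ι ι ℝ) {x : ι → ι → ℝ}
    {C : ℝ} (h : ∀ i j, |x i j| ≤ C) :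
    |∑ i, ∑ j, J i j * x i j| ≤ C * ∑ i, ∑ j, |J i j| := by
  calc |∑ i, ∑ j, J i j * x i j| ≤ ∑ i, ∑ j, |J i j * x i j| :=
        (abs_sum_le_sum_abs _ _).trans (sum_le_sum fun i _ => abs_sum_le_sum_abs _ _)
    _ ≤ ∑ i, ∑ j, C * |J i j| := by
        gcongr with i _ j _
        rw [abs_mul, mul_comm]
        exact mul_le_mul_of_nonneg_right (h i j) (abs_nonneg _)
    _ = C * ∑ i, ∑ j, |J i j| := by simp only [mul_sum]

instance : IsProbabilityMeasure (volume.restrict I01) := ⟨by simp [I01]⟩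

namespace FracPartition

variable {q : ℕ}

lemma ext {ρ σ : FracPartition q} (h : ρ.toFun = σ.toFun) : ρ = σ := by
  cases ρ; cases σ; cases h; rfl

lemma ae_abs_le_one (ρ : FracPartition q) (i : Fin q) :
    ∀ᵐ x ∂volume.restrict I01, |ρ.toFun i x| ≤ 1 := by
  filter_upwards [ae_restrict_mem measurableSet_Icc] with x hx
  obtain ⟨h0, h1⟩ := ρ.mem_I01 i x hx
  exact abs_le.2 ⟨by linarith, h1⟩

lemma integrable (ρ : FracPartition q) (i : Fin q) :
    Integrable (ρ.toFun i) (volume.restrict I01) :=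
  .of_bound (ρ.measurable i).aestronglyMeasurable 1 (ρ.ae_abs_le_one i)

def marginal (ρ : FracPartition q) (i : Fin q) : ℝ := ∫ x in I01, ρ.toFun i x

def ofNonneg (f : Fin q → ℝ → ℝ) (hf : ∀ i, Measurable (f i))
    (h0 : ∀ i, ∀ x ∈ I01, 0 ≤ f i x) (h1 : ∀ x ∈ I01, ∑ i, f i x = 1) :
    FracPartition q where
  toFun := f
  measurable := hf
  mem_I01 i x hx := ⟨h0 i x hx, h1 x hx ▸ single_le_sum (fun j _ => h0 j x hx) (mem_univ i)⟩
  sum_one := h1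

def const (a : Fin q → ℝ) (ha : IsDist a) : FracPartition q :=
  ofNonneg (fun i _ => a i) (fun _ => measurable_const) (fun i _ _ => ha.1 i) (fun _ _ => ha.2)

lemma marginal_const {a : Fin q → ℝ} (ha : IsDist a) (i : Fin q) :
    (const a ha).marginal i = a i := by
  simp [marginal, const, ofNonneg]

end FracPartition

open FracPartition

section Energy

variable {q : ℕ} {W : ℝ → ℝ → ℝ} {M : ℝ}

lemma energy_eq_sum_graphonForm (hW : Measurable (Function.uncurry W))
    (hWM : ∀ x y, |W x y| ≤ M) (J : Matrix (Fin q) (Fin q) ℝ) (ρ : FracPartition q) :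
    energy W J ρ
      = -∑ i, ∑ j, J i j * graphonForm (volume.restrict I01) W (ρ.toFun i) (ρ.toFun j) := by
  simp only [energy, graphonForm]
  congr 1
  refine sum_congr rfl fun i _ => sum_congr rfl fun j _ => ?_
  rw [integral_prod _ (integrable_graphonIntegrand hW hWM (ρ.measurable i) (ρ.ae_abs_le_one i)
    (ρ.measurable j) (ρ.ae_abs_le_one j))]

lemma abs_energy_le (hW : Measurable (Function.uncurry W)) (hWM : ∀ x y, |W x y| ≤ M)
    (J : Matrix (Fin q) (Fin q) ℝ) (ρ : FracPartition q) :
    |energy W J ρ| ≤ M * ∑ i, ∑ j, |J i j| := by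
  rw [energy_eq_sum_graphonForm hW hWM, abs_neg]
  exact abs_sum_sum_mul_le J fun i j =>
    abs_graphonForm_le hWM (ρ.ae_abs_le_one i) (ρ.ae_abs_le_one j)

lemma abs_energy_sub_le (hW : Measurable (Function.uncurry W)) (hWM : ∀ x y, |W x y| ≤ M)
    (J : Matrix (Fin q) (Fin q) ℝ) (ρ σ : FracPartition q) {D : ℝ}
    (hD : ∀ i, ∫ x in I01, |ρ.toFun i x - σ.toFun i x| ≤ D) :
    |energy W J ρ - energy W J σ| ≤ 2 * M * (∑ i, ∑ j, |J i j|) * D := by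
  have hM : 0 ≤ M := (abs_nonneg _).trans (hWM 0 0)
  rw [energy_eq_sum_graphonForm hW hWM, energy_eq_sum_graphonForm hW hWM, neg_sub_neg,
    abs_sub_comm, mul_right_comm]
  simp only [← sum_sub_distrib, ← mul_sub]
  refine abs_sum_sum_mul_le J fun i j => ?_
  calc _ ≤ M * ((∫ x in I01, |ρ.toFun i x - σ.toFun i x|)
        + ∫ x in I01, |ρ.toFun j x - σ.toFun j x|) :=
        abs_graphonForm_sub_le hW hWM (ρ.measurable i) (ρ.ae_abs_le_one i) (σ.measurable i)
          (σ.ae_abs_le_one i) (ρ.measurable j) (ρ.ae_abs_le_one j) (σ.measurable j)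
          (σ.ae_abs_le_one j)
    _ ≤ M * (D + D) := by gcongr <;> exact hD _
    _ = 2 * M * D := by ring

lemma mgse_le_energy (hW : Measurable (Function.uncurry W)) (hWM : ∀ x y, |W x y| ≤ M)
    {J : Matrix (Fin q) (Fin q) ℝ} {a : Fin q → ℝ} (ρ : FracPartition q)
    (hρ : ∀ i, ρ.marginal i = a i) : mgse W J a ≤ energy W J ρ :=
  csInf_le ⟨-(M * ∑ i, ∑ j, |J i j|), by
    rintro _ ⟨σ, -, rfl⟩
    exact neg_le_of_abs_le (abs_energy_le hW hWM J σ)⟩ ⟨ρ, hρ, rfl⟩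

lemma le_mgse {J : Matrix (Fin q) (Fin q) ℝ} {a : Fin q → ℝ} (ha : IsDist a) {c : ℝ}
    (h : ∀ ρ : FracPartition q, (∀ i, ρ.marginal i = a i) → c ≤ energy W J ρ) :
    c ≤ mgse W J a :=
  le_csInf ⟨_, const a ha, marginal_const ha, rfl⟩ <| by
    rintro _ ⟨ρ, hρ, rfl⟩
    exact h ρ hρ

end Energy

section Refinement

variable {q m : ℕ} (π : Fin m → Fin q) {W : ℝ → ℝ → ℝ} {M : ℝ}

def FracPartition.map (σ : FracPartition m) : FracPartition q :=
  ofNonneg (fun i x => ∑ s with π s = i, σ.toFun s x)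
    (fun _ => Finset.measurable_sum _ fun s _ => σ.measurable s)
    (fun _ x hx => sum_nonneg fun s _ => (σ.mem_I01 s x hx).1)
    (fun x hx => by rw [sum_fiberwise]; exact σ.sum_one x hx)

lemma FracPartition.toFun_map (σ : FracPartition m) (i : Fin q) :
    (σ.map π).toFun i = fun x => ∑ s with π s = i, σ.toFun s x := rfl

lemma FracPartition.marginal_map (σ : FracPartition m) (i : Fin q) :
    (σ.map π).marginal i = ∑ s with π s = i, σ.marginal s := by
  rw [marginal, toFun_map]
  exact integral_finsetSum _ fun s _ => σ.integrable s

lemma energy_map (hW : Measurable (Function.uncurry W)) (hWM : ∀ x y, |W x y| ≤ M)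
    (J : Matrix (Fin q) (Fin q) ℝ) (σ : FracPartition m) :
    energy W J (σ.map π) = energy W (J.submatrix π π) σ := by
  set B := fun s t => graphonForm (volume.restrict I01) W (σ.toFun s) (σ.toFun t)
  rw [energy_eq_sum_graphonForm hW hWM, energy_eq_sum_graphonForm hW hWM]
  congr 1
  calc ∑ i, ∑ j, J i j * graphonForm _ W ((σ.map π).toFun i) ((σ.map π).toFun j)
      = ∑ i, ∑ j, ∑ s with π s = i, ∑ t with π t = j, J i j * B s t := by
        simp only [toFun_map, graphonForm_sum_sum hW hWM _ _ σ.measurable σ.ae_abs_le_one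
          σ.measurable σ.ae_abs_le_one, mul_sum, B]
    _ = ∑ i, ∑ s with π s = i, ∑ t, J i (π t) * B s t :=
        sum_congr rfl fun i _ => sum_comm.trans <| sum_congr rfl fun s _ =>
          sum_fiberwise_dep π fun j t => J i j * B s t
    _ = ∑ s, ∑ t, J (π s) (π t) * B s t :=
        sum_fiberwise_dep π fun i s => ∑ t, J i (π t) * B s t

variable {b : Fin m → ℝ}

lemma sum_fiber_div_mul (hpos : ∀ i, 0 < ∑ s with π s = i, b s) (y : Fin q → ℝ)
    (i : Fin q) :
    ∑ s with π s = i, b s / (∑ t with π t = π s, b t) * y (π s) = y i := by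
  calc _ = ∑ s with π s = i, b s / (∑ t with π t = i, b t) * y i :=
        sum_congr rfl fun s hs => by rw [(mem_filter.1 hs).2]
    _ = y i := by rw [← sum_mul, ← sum_div, div_self (hpos i).ne', one_mul]

def FracPartition.pullback (hb : ∀ s, 0 ≤ b s) (hpos : ∀ i, 0 < ∑ s with π s = i, b s)
    (ρ : FracPartition q) : FracPartition m :=
  ofNonneg (fun s x => b s / (∑ t with π t = π s, b t) * ρ.toFun (π s) x)
    (fun s => (ρ.measurable (π s)).const_mul _)
    (fun s x hx => mul_nonneg (div_nonneg (hb s) (hpos _).le) (ρ.mem_I01 _ x hx).1)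
    (fun x hx => by
      rw [← sum_fiberwise univ π]
      simp only [sum_fiber_div_mul π hpos (ρ.toFun · x)]
      exact ρ.sum_one x hx)

lemma FracPartition.map_pullback (hb : ∀ s, 0 ≤ b s)
    (hpos : ∀ i, 0 < ∑ s with π s = i, b s) (ρ : FracPartition q) :
    (ρ.pullback π hb hpos).map π = ρ :=
  ext <| funext fun i => funext fun x => sum_fiber_div_mul π hpos (ρ.toFun · x) i

lemma FracPartition.marginal_pullback (hb : ∀ s, 0 ≤ b s)
    (hpos : ∀ i, 0 < ∑ s with π s = i, b s) (ρ : FracPartition q) (s : Fin m) :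
    (ρ.pullback π hb hpos).marginal s
      = b s / (∑ t with π t = π s, b t) * ρ.marginal (π s) :=
  integral_const_mul _ _

lemma mgse_submatrix (hW : Measurable (Function.uncurry W)) (hWM : ∀ x y, |W x y| ≤ M)
    (J : Matrix (Fin q) (Fin q) ℝ) (hb : ∀ s, 0 ≤ b s)
    (hpos : ∀ i, 0 < ∑ s with π s = i, b s) :
    mgse W (J.submatrix π π) b = mgse W J fun i => ∑ s with π s = i, b s := by
  unfold mgse
  congr 1
  ext e
  constructor
  · rintro ⟨σ, hσ, rfl⟩
    refine ⟨σ.map π, fun i => ?_, (energy_map π hW hWM J σ).symm⟩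
    exact (marginal_map π σ i).trans (sum_congr rfl fun s _ => hσ s)
  · rintro ⟨ρ, hρ, rfl⟩
    refine ⟨ρ.pullback π hb hpos, fun s => ?_, ?_⟩
    · exact (marginal_pullback π hb hpos ρ s).trans <| by
        rw [marginal, hρ]
        exact div_mul_cancel₀ _ (hpos _).ne'
    · rw [← energy_map π hW hWM, map_pullback]

end Refinement

section Blowup

variable {q : ℕ} (k : Fin q → ℕ) {W : ℝ → ℝ → ℝ} {M : ℝ}

def blockIndex (s : Fin (∑ i, k i)) : Fin q := (finSigmaFinEquiv.symm s).1

lemma sum_blockIndex_fiber (c : ℝ) (i : Fin q) :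
    ∑ s with blockIndex k s = i, c = k i * c := by
  rw [sum_filter, ← finSigmaFinEquiv.sum_comp, Fintype.sum_sigma]
  simp [blockIndex]

lemma mgse_nat_div_eq_mgse_uniform (hW : Measurable (Function.uncurry W))
    (hWM : ∀ x y, |W x y| ≤ M) (J : Matrix (Fin q) (Fin q) ℝ) (hk : ∀ i, 0 < k i) :
    mgse W J (fun i => (k i : ℝ) / (∑ j, k j : ℕ))
      = mgse W (J.submatrix (blockIndex k) (blockIndex k))
          fun _ => ((∑ j, k j : ℕ) : ℝ)⁻¹ := by
  have hpos (i : Fin q) : 0 < ∑ s with blockIndex k s = i, ((∑ j, k j : ℕ) : ℝ)⁻¹ := by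
    rw [sum_blockIndex_fiber]
    have hm := (hk i).trans_le (single_le_sum (fun j _ => Nat.zero_le (k j)) (mem_univ i))
    exact mul_pos (Nat.cast_pos.2 (hk i)) (inv_pos.2 (Nat.cast_pos.2 hm))
  rw [mgse_submatrix (blockIndex k) hW hWM J (fun _ => by positivity) hpos]
  simp_rw [sum_blockIndex_fiber, div_eq_mul_inv]

end Blowup

section Transfer

variable {q : ℕ}

lemma IsDist.exists_mul_sum_eq {b : Fin q → ℝ} (hb : IsDist b) {v : Fin q → ℝ}
    (hv : ∀ i, 0 ≤ v i) : ∃ e, IsDist e ∧ ∀ i, e i * ∑ j, v j = v i := by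
  by_cases hd : ∑ j, v j = 0
  · refine ⟨b, hb, fun i => ?_⟩
    rw [hd, mul_zero, eq_comm]
    exact (sum_eq_zero_iff_of_nonneg fun j _ => hv j).1 hd i (mem_univ i)
  · refine ⟨fun i => v i / ∑ j, v j, ⟨fun i => ?_, ?_⟩, fun i => div_mul_cancel₀ _ hd⟩
    · exact div_nonneg (hv i) (sum_nonneg fun j _ => hv j)
    · rw [← sum_div, div_self hd]

namespace FracPartition

variable (ρ : FracPartition q) {c : Fin q → ℝ} (hc : ∀ i, c i ∈ Set.Icc 0 1)
  {e : Fin q → ℝ} (he : IsDist e)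

def redistribute : FracPartition q :=
  ofNonneg (fun i x => c i * ρ.toFun i x + e i * ∑ j, (1 - c j) * ρ.toFun j x)
    (fun i => ((ρ.measurable i).const_mul _).add
      ((Finset.measurable_sum _ fun j _ => (ρ.measurable j).const_mul _).const_mul _))
    (fun i x hx => add_nonneg (mul_nonneg (hc i).1 (ρ.mem_I01 i x hx).1)
      (mul_nonneg (he.1 i) (sum_nonneg fun j _ =>
        mul_nonneg (sub_nonneg.2 (hc j).2) (ρ.mem_I01 j x hx).1)))
    (fun x hx => by
      rw [sum_add_distrib, ← sum_mul, he.2, one_mul, ← sum_add_distrib]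
      simp only [← add_mul, add_sub_cancel, one_mul]
      exact ρ.sum_one x hx)

lemma marginal_redistribute (i : Fin q) :
    (ρ.redistribute hc he).marginal i
      = c i * ρ.marginal i + e i * ∑ j, (1 - c j) * ρ.marginal j := by
  have hint (j : Fin q) := (ρ.integrable j).const_mul (1 - c j)
  simp only [marginal, redistribute, ofNonneg]
  rw [integral_add ((ρ.integrable i).const_mul _)
      ((integrable_finsetSum _ fun j _ => hint j).const_mul _),
    integral_const_mul, integral_const_mul, integral_finsetSum _ fun j _ => hint j]
  simp only [integral_const_mul]

lemma integral_abs_redistribute_sub_le (i : Fin q) :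
    ∫ x in I01, |(ρ.redistribute hc he).toFun i x - ρ.toFun i x|
      ≤ (ρ.redistribute hc he).marginal i + (1 - 2 * c i) * ρ.marginal i := by
  set ρ' := ρ.redistribute hc he
  have hint := (ρ'.integrable i).add ((ρ.integrable i).const_mul (1 - 2 * c i))
  rw [marginal, marginal, ← integral_const_mul, ← integral_add (ρ'.integrable i)
    ((ρ.integrable i).const_mul _)]
  refine integral_mono_ae ((ρ'.integrable i).sub (ρ.integrable i)).abs hint ?_
  filter_upwards [ae_restrict_mem measurableSet_Icc] with x hx
  have hkeep : 0 ≤ (1 - c i) * ρ.toFun i x :=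
    mul_nonneg (sub_nonneg.2 (hc i).2) (ρ.mem_I01 i x hx).1
  have hgain : 0 ≤ e i * ∑ j, (1 - c j) * ρ.toFun j x :=
    mul_nonneg (he.1 i) (sum_nonneg fun j _ =>
      mul_nonneg (sub_nonneg.2 (hc j).2) (ρ.mem_I01 j x hx).1)
  have hρ' : ρ'.toFun i x = c i * ρ.toFun i x + e i * ∑ j, (1 - c j) * ρ.toFun j x := rfl
  rw [abs_le]
  constructor <;> linarith

end FracPartition

lemma FracPartition.exists_marginal_eq_integral_abs_sub_le (ρ : FracPartition q)
    {a a' : Fin q → ℝ} (ha : IsDist a) (ha' : IsDist a') (hρ : ∀ i, ρ.marginal i = a i) :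
    ∃ ρ' : FracPartition q, (∀ i, ρ'.marginal i = a' i) ∧
      ∀ i, ∫ x in I01, |ρ'.toFun i x - ρ.toFun i x| ≤ |a i - a' i| := by
  set u := fun i => min (a i) (a' i)
  -- `c i * a i = u i` holds also when `a i = 0`, where the division returns `0`.
  set c := fun i => u i / a i
  have hcu (i : Fin q) : c i * a i = u i := by
    rcases (ha.1 i).eq_or_lt with h | h
    · simp [c, u, ← h, min_eq_left (ha'.1 i)]
    · exact div_mul_cancel₀ _ h.ne'
  have hc (i : Fin q) : c i ∈ Set.Icc 0 1 :=
    ⟨div_nonneg (le_min (ha.1 i) (ha'.1 i)) (ha.1 i),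
      div_le_one_of_le₀ (min_le_left _ _) (ha.1 i)⟩
  obtain ⟨e, he, hev⟩ := ha'.exists_mul_sum_eq (v := fun i => a' i - u i)
    fun i => sub_nonneg.2 (min_le_right _ _)
  have hreleased : ∑ j, (1 - c j) * ρ.marginal j = ∑ j, (a' j - u j) := by
    simp only [hρ, sub_mul, one_mul, hcu, sum_sub_distrib, ha.2, ha'.2]
  have hmarg (i : Fin q) : (ρ.redistribute hc he).marginal i = a' i := by
    rw [marginal_redistribute, hreleased, hev, hρ, hcu]
    ring
  refine ⟨ρ.redistribute hc he, hmarg, fun i => ?_⟩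
  refine (ρ.integral_abs_redistribute_sub_le hc he i).trans_eq ?_
  rw [hmarg, hρ, sub_mul, mul_assoc, hcu]
  rcases le_total (a i) (a' i) with h | h
  · simp only [u, min_eq_left h, abs_of_nonpos (sub_nonpos.2 h)]; ring
  · simp only [u, min_eq_right h, abs_of_nonneg (sub_nonneg.2 h)]; ring

end Transfer

section Continuity

variable {q : ℕ} {W : ℝ → ℝ → ℝ} {M : ℝ}

lemma mgse_le_mgse_add (hW : Measurable (Function.uncurry W)) (hWM : ∀ x y, |W x y| ≤ M)
    (J : Matrix (Fin q) (Fin q) ℝ) {a a' : Fin q → ℝ} (ha : IsDist a) (ha' : IsDist a') :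
    mgse W J a' ≤ mgse W J a + 2 * M * (∑ i, ∑ j, |J i j|) * ∑ i, |a i - a' i| := by
  rw [← sub_le_iff_le_add]
  refine le_mgse ha fun ρ hρ => ?_
  obtain ⟨ρ', hρ', hdist⟩ := ρ.exists_marginal_eq_integral_abs_sub_le ha ha' hρ
  have hclose := abs_energy_sub_le hW hWM J ρ' ρ fun i =>
    (hdist i).trans <|
      single_le_sum (f := fun j => |a j - a' j|) (fun j _ => abs_nonneg _) (mem_univ i)
  linarith [mgse_le_energy (J := J) hW hWM ρ' hρ', (abs_le.1 hclose).2]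

lemma abs_mgse_sub_le (hW : Measurable (Function.uncurry W)) (hWM : ∀ x y, |W x y| ≤ M)
    (J : Matrix (Fin q) (Fin q) ℝ) {a a' : Fin q → ℝ} (ha : IsDist a) (ha' : IsDist a') :
    |mgse W J a - mgse W J a'| ≤ 2 * M * (∑ i, ∑ j, |J i j|) * ∑ i, |a i - a' i| := by
  have hsymm := mgse_le_mgse_add hW hWM J ha' ha
  simp only [abs_sub_comm (a' _)] at hsymm
  exact abs_sub_le_iff.2 ⟨by linarith, by linarith [mgse_le_mgse_add hW hWM J ha ha']⟩

end Continuity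

lemma IsDist.exists_nat_div_approx {q : ℕ} {a : Fin q → ℝ} (ha : IsDist a) {δ : ℝ}
    (hδ : 0 < δ) :
    ∃ k : Fin q → ℕ, (∀ i, 0 < k i) ∧
      IsDist (fun i => (k i : ℝ) / (∑ j, k j : ℕ)) ∧
      ∑ i, |a i - k i / (∑ j, k j : ℕ)| ≤ δ := by
  obtain ⟨N, hN⟩ := exists_nat_gt (2 * q / δ)
  refine ⟨fun i => ⌊N * a i⌋₊ + 1, fun i => Nat.succ_pos _, ?_⟩
  set k := fun i => ⌊N * a i⌋₊ + 1
  set m : ℝ := ((∑ j, k j : ℕ) : ℝ)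
  have hk (i : Fin q) : N * a i < k i ∧ (k i : ℝ) ≤ N * a i + 1 := by
    have := Nat.floor_le (mul_nonneg N.cast_nonneg (ha.1 i))
    exact ⟨by push_cast [k]; exact Nat.lt_floor_add_one _, by push_cast [k]; linarith⟩
  have hmN : N ≤ m ∧ m ≤ N + q := by
    have hsum : ∑ i, (N : ℝ) * a i = N := by rw [← mul_sum, ha.2, mul_one]
    constructor
    · calc (N : ℝ) = ∑ i, N * a i := hsum.symm
        _ ≤ m := by push_cast [m]; exact sum_le_sum fun i _ => (hk i).1.le
    · calc m ≤ ∑ i, ((N : ℝ) * a i + 1) := by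
            push_cast [m]
            exact sum_le_sum fun i _ => (hk i).2
        _ = N + q := by rw [sum_add_distrib, hsum]; simp
  have hNpos : (0 : ℝ) < N := lt_of_le_of_lt (by positivity) hN
  have hm : 0 < m := hNpos.trans_le hmN.1
  have hterm (i : Fin q) : |a i - k i / m| ≤ (1 + q * a i) / m := by
    rw [show a i - k i / m = (m * a i - k i) / m by field_simp, abs_div, abs_of_pos hm]
    gcongr
    have h1 := mul_le_mul_of_nonneg_right hmN.1 (ha.1 i)
    have h2 := mul_le_mul_of_nonneg_right hmN.2 (ha.1 i)
    rw [abs_le]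
    constructor <;> linarith [(hk i).1, (hk i).2, ha.1 i]
  refine ⟨⟨fun i => by positivity, ?_⟩, ?_⟩
  · rw [← sum_div, ← Nat.cast_sum, div_self hm.ne']
  calc ∑ i, |a i - k i / m| ≤ ∑ i, (1 + q * a i) / m := sum_le_sum fun i _ => hterm i
    _ = 2 * q / m := by rw [← sum_div, sum_add_distrib, ← mul_sum, ha.2]; simp; ring
    _ ≤ δ := by
        rw [div_lt_iff₀ hδ] at hN
        rw [div_le_iff₀ hm]
        nlinarith [hmN.1]

lemma cauchySeq_of_forall_dist_le {α : Type*} [PseudoMetricSpace α] {f : ℕ → α}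
    (h : ∀ ε > 0, ∃ g : ℕ → α, CauchySeq g ∧ ∀ n, dist (f n) (g n) ≤ ε) :
    CauchySeq f := by
  refine Metric.cauchySeq_iff.2 fun ε hε => ?_
  obtain ⟨g, hg, hfg⟩ := h (ε / 3) (by positivity)
  obtain ⟨N, hN⟩ := Metric.cauchySeq_iff.1 hg (ε / 3) (by positivity)
  refine ⟨N, fun m hm n hn => ?_⟩
  calc dist (f m) (f n) ≤ dist (f m) (g m) + dist (g m) (g n) + dist (g n) (f n) :=
        dist_triangle4 _ _ _ _
    _ < ε := by linarith [hfg m, hfg n, hN m hm n hn, dist_comm (g n) (f n)]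

theorem stmt5 (lo hi : ℝ) (W : ℕ → ℝ → ℝ → ℝ)
    (hW : ∀ n, IsGraphon (W n)) (hWI : ∀ n x y, W n x y ∈ Set.Icc lo hi)
    (hconv : ∀ q : ℕ, 1 ≤ q → ∀ J : Matrix (Fin q) (Fin q) ℝ, J.IsSymm →
      ∃ L : ℝ, Tendsto (fun n => mgse (W n) J (fun _ => (q : ℝ)⁻¹)) atTop (nhds L)) :
    ∀ q : ℕ, 1 ≤ q → ∀ a : Fin q → ℝ, IsDist a →
      ∀ J : Matrix (Fin q) (Fin q) ℝ, J.IsSymm →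
        ∃ L : ℝ, Tendsto (fun n => mgse (W n) J a) atTop (nhds L) := by
  intro q hq a ha J hJ
  set M := max |lo| |hi|
  have hWM (n : ℕ) (x y : ℝ) : |W n x y| ≤ M := abs_le_max_abs_abs (hWI n x y).1 (hWI n x y).2
  set K := 2 * M * ∑ i, ∑ j, |J i j|
  have hK : 0 ≤ K := by positivity
  refine cauchySeq_tendsto_of_complete <| cauchySeq_of_forall_dist_le fun ε hε => ?_
  obtain ⟨k, hk, hk', hka⟩ := ha.exists_nat_div_approx (div_pos hε (by linarith : 0 < K + 1))
  obtain ⟨L, hL⟩ := hconv (∑ i, k i)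
    ((hk ⟨0, hq⟩).trans_le (single_le_sum (fun j _ => Nat.zero_le (k j)) (mem_univ _)))
    _ (hJ.submatrix (blockIndex k))
  refine ⟨_, hL.cauchySeq, fun n => ?_⟩
  rw [Real.dist_eq, ← mgse_nat_div_eq_mgse_uniform k (hW n).1 (hWM n) J hk]
  calc _ ≤ K * ∑ i, |a i - k i / (∑ j, k j : ℕ)| :=
        abs_mgse_sub_le (hW n).1 (hWM n) J ha hk'
    _ ≤ K * (ε / (K + 1)) := by gcongr
    _ ≤ ε := by
        rw [mul_div_assoc']
        exact div_le_of_le_mul₀ (by linarith) hε.le (by linarith)
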